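/- Let X_1, X_2, S, Z, F_1,...,F_r be finite random variables such that for every t in [1:r] the Markov chain F_t - F_{[1:t-1]} X_{(t)_2} - X_{(t+1)_2} holds. Then for every i in [1:r], Sum_{t=1}^i H(F_t | X_{(t+1)_2}, F_{[1:t-1]}) - H(F_{[1:i]} | S, Z) = I(F_{[1:i]}; S, Z) + I(X_1; X_2 | F_{[1:i]}) - I(X_1; X_2). Consequently, the condition R_0 > Sum_{t=1}^i H(F_t | X_{(t+1)_2}, F_{[1:t-1]}) - H(F_{[1:i]} | S, Z) is equivalent to I(F_{[1:i]}; S, Z) + I(X_1; X_2 | F_{[1:i]}) < R_0 + I(X_1; X_2). -/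

import Mathlib

open scoped BigOperators

namespace InfoTheory

variable {Ω : Type*} [Fintype Ω]

/-- `p` is a probability mass function on the finite type `Ω`. -/
def IsPMF (p : Ω → ℝ) : Prop := (∀ ω, 0 ≤ p ω) ∧ ∑ ω, p ω = 1

/-- Distribution of the random variable `A` under `p`. -/
noncomputable def rvDist {α : Type*} [Fintype α] [DecidableEq α]
    (p : Ω → ℝ) (A : Ω → α) (a : α) : ℝ :=
  ∑ ω, if A ω = a then p ω else 0

/-- Shannon entropy (base 2) of the random variable `A` under `p`. -/
noncomputable def entH {α : Type*} [Fintype α] [DecidableEq α]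
    (p : Ω → ℝ) (A : Ω → α) : ℝ :=
  -∑ a, rvDist p A a * Real.logb 2 (rvDist p A a)

/-- Conditional entropy `H(A|B)`. -/
noncomputable def condH {α β : Type*} [Fintype α] [DecidableEq α] [Fintype β] [DecidableEq β]
    (p : Ω → ℝ) (A : Ω → α) (B : Ω → β) : ℝ :=
  entH p (fun ω => (A ω, B ω)) - entH p B

/-- Mutual information `I(A;B)`. -/
noncomputable def mi {α β : Type*} [Fintype α] [DecidableEq α] [Fintype β] [DecidableEq β]
    (p : Ω → ℝ) (A : Ω → α) (B : Ω → β) : ℝ :=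
  entH p A + entH p B - entH p (fun ω => (A ω, B ω))

/-- Conditional mutual information `I(A;B|C)`. -/
noncomputable def cmi {α β γ : Type*} [Fintype α] [DecidableEq α] [Fintype β] [DecidableEq β]
    [Fintype γ] [DecidableEq γ]
    (p : Ω → ℝ) (A : Ω → α) (B : Ω → β) (C : Ω → γ) : ℝ :=
  condH p A C + condH p B C - condH p (fun ω => (A ω, B ω)) C

/-- Markov chain `A - B - C`: `A` and `C` are conditionally independent given `B`. -/
def Markov {α β γ : Type*} [Fintype α] [DecidableEq α] [Fintype β] [DecidableEq β]
    [Fintype γ] [DecidableEq γ]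
    (p : Ω → ℝ) (A : Ω → α) (B : Ω → β) (C : Ω → γ) : Prop :=
  ∀ a b c, rvDist p (fun ω => ((A ω, B ω), C ω)) ((a, b), c) * rvDist p B b
    = rvDist p (fun ω => (A ω, B ω)) (a, b) * rvDist p (fun ω => (B ω, C ω)) (b, c)

/-- Total variation distance between two pmfs on the finite type `α`. -/
noncomputable def TV {α : Type*} [Fintype α] (p q : α → ℝ) : ℝ :=
  (∑ a, |p a - q a|) / 2

/-- The prefix `F_{[1:k]}` of a finite family of random variables, encoded by replacing
the coordinates beyond `k` by `none`. -/
def Fpre {r : ℕ} {𝓕 : Fin r → Type*} (F : ∀ i : Fin r, Ω → 𝓕 i) (k : ℕ) :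
    Ω → ∀ j : Fin r, Option (𝓕 j) :=
  fun ω j => if (j : ℕ) < k then some (F j ω) else none

/-- The full tuple `F_{[1:r]}`. -/
def Ffull {r : ℕ} {𝓕 : Fin r → Type*} (F : ∀ i : Fin r, Ω → 𝓕 i) :
    Ω → ∀ j : Fin r, 𝓕 j :=
  fun ω j => F j ω

end InfoTheory

/-! With `g k = I(X_1;X_2|F_{[1:k]}) + H(F_{[1:k]})`, each round satisfies
`H(F_t|X_b,F_{[1:t-1]}) = g t - g (t-1)`: given `(F_{[1:t-1]}, X_a)` the new message `F_t` is
independent of `X_b`, so `I(X_1;X_2|F_{[1:t]}) - I(X_1;X_2|F_{[1:t-1]}) = -I(F_t;X_b|F_{[1:t-1]})`.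
The sum therefore telescopes to `g i - g 0 = I(X_1;X_2|F_{[1:i]}) + H(F_{[1:i]}) - I(X_1;X_2)`,
and subtracting `H(F_{[1:i]}|S,Z)` turns `H(F_{[1:i]})` into `I(F_{[1:i]};S,Z)`. -/

namespace InfoTheory

open Finset

section Prefix

variable {Ω : Type*} {r : ℕ} {𝓕 : Fin r → Type*}

theorem Fpre_zero (F : ∀ i : Fin r, Ω → 𝓕 i) : Fpre F 0 = fun _ _ => none := by
  funext ω j
  simp [Fpre]

theorem Fpre_succ_eq_iff (F : ∀ i : Fin r, Ω → 𝓕 i) (t : Fin r) (ω ω' : Ω) :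
    Fpre F (t + 1) ω = Fpre F (t + 1) ω' ↔ F t ω = F t ω' ∧ Fpre F t ω = Fpre F t ω' := by
  simp only [funext_iff, Fpre]
  constructor
  · intro h
    refine ⟨by simpa using h t, fun j => ?_⟩
    split_ifs with hj
    · simpa [hj, Nat.lt_succ_of_lt hj] using h j
    · rfl
  · rintro ⟨ht, h⟩ j
    rcases lt_trichotomy (j : ℕ) t with hj | hj | hj
    · simpa [hj, Nat.lt_succ_of_lt hj] using h j
    · obtain rfl := Fin.ext hj
      simpa using ht
    · simp [show ¬ (j : ℕ) < t + 1 by omega]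

end Prefix

variable {Ω : Type*} [Fintype Ω] {α β γ δ : Type*} [Fintype α] [DecidableEq α]
  [Fintype β] [DecidableEq β] [Fintype γ] [DecidableEq γ] [Fintype δ] [DecidableEq δ]
  {p : Ω → ℝ}

theorem entH_eq_neg_sum_logb (p : Ω → ℝ) (A : Ω → α) :
    entH p A = -∑ ω, p ω * Real.logb 2 (rvDist p A (A ω)) := by
  unfold entH
  congr 1
  conv_lhs => enter [2, a]; rw [rvDist, sum_mul]
  rw [sum_comm]
  refine sum_congr rfl fun ω _ => ?_
  simp only [ite_mul, zero_mul, sum_ite_eq, mem_univ, if_true]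
  rfl

theorem le_rvDist_self (hp0 : ∀ ω, 0 ≤ p ω) (A : Ω → α) (ω : Ω) :
    p ω ≤ rvDist p A (A ω) := by
  have := single_le_sum (f := fun ω' => if A ω' = A ω then p ω' else 0)
    (fun ω' _ => by split_ifs <;> simp [hp0]) (mem_univ ω)
  simpa [rvDist] using this

theorem rvDist_self_pos (hp0 : ∀ ω, 0 ≤ p ω) (A : Ω → α) {ω : Ω} (hpos : 0 < p ω) :
    0 < rvDist p A (A ω) :=
  hpos.trans_le (le_rvDist_self hp0 A ω)

theorem entH_eq_of_eq_iff (p : Ω → ℝ) (A : Ω → α) (B : Ω → β)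
    (h : ∀ ω ω', A ω = A ω' ↔ B ω = B ω') : entH p A = entH p B := by
  have hdist : ∀ ω, rvDist p A (A ω) = rvDist p B (B ω) := fun ω =>
    sum_congr rfl fun ω' _ => by simp only [h ω' ω]
  simp only [entH_eq_neg_sum_logb, hdist]

theorem entH_const (hp1 : ∑ ω, p ω = 1) (c : α) : entH p (fun _ : Ω => c) = 0 := by
  simp [entH_eq_neg_sum_logb, rvDist, hp1]

theorem condH_const (hp1 : ∑ ω, p ω = 1) (A : Ω → α) (c : β) :
    condH p A (fun _ => c) = entH p A := by
  rw [condH, entH_const hp1, sub_zero]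
  exact entH_eq_of_eq_iff p _ _ fun ω ω' => by simp

theorem cmi_const (hp1 : ∑ ω, p ω = 1) (A : Ω → α) (B : Ω → β) (c : γ) :
    cmi p A B (fun _ => c) = mi p A B := by
  simp only [cmi, mi, condH_const hp1]

theorem cmi_comm (p : Ω → ℝ) (A : Ω → α) (B : Ω → β) (C : Ω → γ) :
    cmi p A B C = cmi p B A C := by
  have : condH p (fun ω => (A ω, B ω)) C = condH p (fun ω => (B ω, A ω)) C := by
    unfold condH
    congr 1
    exact entH_eq_of_eq_iff p _ _ fun ω ω' => by simp only [Prod.mk.injEq]; tauto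
  rw [cmi, cmi, this, add_comm (condH p A C)]

theorem entH_prod_congr_right (p : Ω → ℝ) (E : Ω → α) {C : Ω → β} {C' : Ω → γ}
    (h : ∀ ω ω', C ω = C ω' ↔ C' ω = C' ω') :
    entH p (fun ω => (E ω, C ω)) = entH p (fun ω => (E ω, C' ω)) :=
  entH_eq_of_eq_iff p _ _ fun ω ω' => by simp only [Prod.mk.injEq, h]

theorem cmi_congr_right (p : Ω → ℝ) (A : Ω → α) (B : Ω → β) {C : Ω → γ} {C' : Ω → δ}
    (h : ∀ ω ω', C ω = C ω' ↔ C' ω = C' ω') : cmi p A B C = cmi p A B C' := by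
  simp only [cmi, condH, entH_eq_of_eq_iff p C C' h, entH_prod_congr_right p _ h]

/-- Where `p ω > 0` all four marginals at the value of `ω` are positive, so the defining
identity of a Markov chain passes through `logb` pointwise. -/
theorem Markov.entH_add_entH (hp0 : ∀ ω, 0 ≤ p ω) {A : Ω → α} {B : Ω → β} {C : Ω → γ}
    (hM : Markov p A B C) :
    entH p (fun ω => ((A ω, B ω), C ω)) + entH p B
      = entH p (fun ω => (A ω, B ω)) + entH p (fun ω => (B ω, C ω)) := by
  have key : ∀ ω,
      p ω * Real.logb 2 (rvDist p (fun ω => ((A ω, B ω), C ω)) ((A ω, B ω), C ω))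
        + p ω * Real.logb 2 (rvDist p B (B ω))
      = p ω * Real.logb 2 (rvDist p (fun ω => (A ω, B ω)) (A ω, B ω))
        + p ω * Real.logb 2 (rvDist p (fun ω => (B ω, C ω)) (B ω, C ω)) := by
    intro ω
    rcases (hp0 ω).eq_or_lt with h0 | hpos
    · simp [← h0]
    have hlog := congrArg (Real.logb 2) (hM (A ω) (B ω) (C ω))
    rw [Real.logb_mul (rvDist_self_pos hp0 (fun ω => ((A ω, B ω), C ω)) hpos).ne'
        (rvDist_self_pos hp0 B hpos).ne',
      Real.logb_mul (rvDist_self_pos hp0 (fun ω => (A ω, B ω)) hpos).ne'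
        (rvDist_self_pos hp0 (fun ω => (B ω, C ω)) hpos).ne'] at hlog
    rw [← mul_add, ← mul_add, hlog]
  simp only [entH_eq_neg_sum_logb, ← neg_add, ← sum_add_distrib, key]

theorem Markov.condH_eq (hp0 : ∀ ω, 0 ≤ p ω) {F : Ω → α} {P : Ω → β} {X : Ω → γ}
    {Y : Ω → δ} (hM : Markov p F (fun ω => (P ω, X ω)) Y) :
    condH p F (fun ω => (Y ω, P ω))
      = cmi p X Y (fun ω => (F ω, P ω)) - cmi p X Y P + condH p F P := by
  have hmk := hM.entH_add_entH hp0
  have e1 : entH p (fun ω => ((F ω, (P ω, X ω)), Y ω))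
      = entH p (fun ω => ((X ω, Y ω), (F ω, P ω))) :=
    entH_eq_of_eq_iff p _ _ fun ω ω' => by simp only [Prod.mk.injEq]; tauto
  have e2 : entH p (fun ω => (P ω, X ω)) = entH p (fun ω => (X ω, P ω)) :=
    entH_eq_of_eq_iff p _ _ fun ω ω' => by simp only [Prod.mk.injEq]; tauto
  have e3 : entH p (fun ω => (F ω, (P ω, X ω))) = entH p (fun ω => (X ω, (F ω, P ω))) :=
    entH_eq_of_eq_iff p _ _ fun ω ω' => by simp only [Prod.mk.injEq]; tauto
  have e4 : entH p (fun ω => ((P ω, X ω), Y ω)) = entH p (fun ω => ((X ω, Y ω), P ω)) :=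
    entH_eq_of_eq_iff p _ _ fun ω ω' => by simp only [Prod.mk.injEq]; tauto
  have e5 : entH p (fun ω => (F ω, (Y ω, P ω))) = entH p (fun ω => (Y ω, (F ω, P ω))) :=
    entH_eq_of_eq_iff p _ _ fun ω ω' => by simp only [Prod.mk.injEq]; tauto
  rw [e1, e2, e3, e4] at hmk
  simp only [cmi, condH, e5]
  linarith

theorem Markov.condH_Fpre {r : ℕ} {𝓕 : Fin r → Type*} [∀ i, Fintype (𝓕 i)]
    [∀ i, DecidableEq (𝓕 i)] (hp0 : ∀ ω, 0 ≤ p ω) {F : ∀ i : Fin r, Ω → 𝓕 i} {X : Ω → α}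
    {Y : Ω → β} {t : Fin r} (hM : Markov p (F t) (fun ω => (Fpre F t ω, X ω)) Y) :
    condH p (F t) (fun ω => (Y ω, Fpre F t ω))
      = (cmi p X Y (Fpre F (t + 1)) + entH p (Fpre F (t + 1)))
        - (cmi p X Y (Fpre F t) + entH p (Fpre F t)) := by
  have hpre := Fpre_succ_eq_iff F t
  rw [hM.condH_eq hp0, condH, cmi_congr_right p X Y (C' := Fpre F (t + 1)) fun ω ω' => by
    simp only [Prod.mk.injEq, hpre], entH_eq_of_eq_iff p (fun ω => (F t ω, Fpre F t ω))
      (Fpre F (t + 1)) fun ω ω' => by simp only [Prod.mk.injEq, hpre]]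
  ring

end InfoTheory

open InfoTheory

/-- Rounds are indexed by `t : Fin r`, `t` standing for round `t + 1`: odd rounds are those with
`Even (t : ℕ)`, and `F_{[1:i]}` is `Fpre F ((i : ℕ) + 1)`. -/
theorem sum_condH_sub_condH_eq
    {Ω 𝒳₁ 𝒳₂ 𝒮 𝒵 : Type*} [Fintype Ω] [Fintype 𝒳₁] [DecidableEq 𝒳₁]
    [Fintype 𝒳₂] [DecidableEq 𝒳₂] [Fintype 𝒮] [DecidableEq 𝒮]
    [Fintype 𝒵] [DecidableEq 𝒵] {r : ℕ}
    {𝓕 : Fin r → Type*} [∀ i, Fintype (𝓕 i)] [∀ i, DecidableEq (𝓕 i)]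
    (p : Ω → ℝ) (hp : IsPMF p)
    (X1 : Ω → 𝒳₁) (X2 : Ω → 𝒳₂) (S : Ω → 𝒮) (Z : Ω → 𝒵)
    (F : ∀ i : Fin r, Ω → 𝓕 i)
    (hMarkov : ∀ t : Fin r,
      (Even (t : ℕ) →
        Markov p (F t) (fun ω => (Fpre F (t : ℕ) ω, X1 ω)) X2) ∧
      (¬ Even (t : ℕ) →
        Markov p (F t) (fun ω => (Fpre F (t : ℕ) ω, X2 ω)) X1)) :
    ∀ i : Fin r,
      ((∑ t ∈ Finset.univ.filter (fun t : Fin r => t ≤ i),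
          (if Even (t : ℕ) then condH p (F t) (fun ω => (X2 ω, Fpre F (t : ℕ) ω))
           else condH p (F t) (fun ω => (X1 ω, Fpre F (t : ℕ) ω))))
        - condH p (Fpre F ((i : ℕ) + 1)) (fun ω => (S ω, Z ω))
        = mi p (Fpre F ((i : ℕ) + 1)) (fun ω => (S ω, Z ω))
            + cmi p X1 X2 (Fpre F ((i : ℕ) + 1)) - mi p X1 X2)
      ∧ ∀ R0 : ℝ,
        (R0 > (∑ t ∈ Finset.univ.filter (fun t : Fin r => t ≤ i),
            (if Even (t : ℕ) then condH p (F t) (fun ω => (X2 ω, Fpre F (t : ℕ) ω))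
             else condH p (F t) (fun ω => (X1 ω, Fpre F (t : ℕ) ω))))
          - condH p (Fpre F ((i : ℕ) + 1)) (fun ω => (S ω, Z ω)))
        ↔ mi p (Fpre F ((i : ℕ) + 1)) (fun ω => (S ω, Z ω))
            + cmi p X1 X2 (Fpre F ((i : ℕ) + 1)) < R0 + mi p X1 X2 := by
  obtain ⟨hp0, hp1⟩ := hp
  intro i
  set g : ℕ → ℝ := fun k => cmi p X1 X2 (Fpre F k) + entH p (Fpre F k) with hg
  have hstep : ∀ t : Fin r,
      (if Even (t : ℕ) then condH p (F t) (fun ω => (X2 ω, Fpre F (t : ℕ) ω))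
        else condH p (F t) (fun ω => (X1 ω, Fpre F (t : ℕ) ω))) = g (t + 1) - g t := by
    intro t
    split_ifs with ht
    · exact ((hMarkov t).1 ht).condH_Fpre hp0
    · rw [((hMarkov t).2 ht).condH_Fpre hp0, cmi_comm p X2 X1, cmi_comm p X2 X1]
  have hsum : ∑ t ∈ Finset.univ.filter (fun t : Fin r => t ≤ i),
      (if Even (t : ℕ) then condH p (F t) (fun ω => (X2 ω, Fpre F (t : ℕ) ω))
        else condH p (F t) (fun ω => (X1 ω, Fpre F (t : ℕ) ω))) = g (i + 1) - g 0 := by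
    rw [Finset.sum_congr rfl fun t _ => hstep t, Finset.filter_ge_eq_Iic]
    exact Fin.sum_Iic_sub i fun k : Fin (r + 1) => g k
  have hg0 : g 0 = mi p X1 X2 := by
    simp only [hg, Fpre_zero, cmi_const hp1, entH_const hp1, add_zero]
  have heq : g (i + 1) - g 0 - condH p (Fpre F (i + 1)) (fun ω => (S ω, Z ω))
      = mi p (Fpre F (i + 1)) (fun ω => (S ω, Z ω)) + cmi p X1 X2 (Fpre F (i + 1))
        - mi p X1 X2 := by
    rw [hg0]
    simp only [hg, condH, mi]
    ring
  rw [hsum]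
  exact ⟨heq, fun R0 => by rw [heq, gt_iff_lt, sub_lt_iff_lt_add]⟩
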